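/- arXiv:1303.3933 — 2 statements merged into one kernel-verified Lean document; each statement's English description precedes it below -/
import Mathlib

section
/- Let (x*,u*) be an admissible process for the linear-convex state-constrained problem (LC). Suppose there exist an absolutely continuous function p : [a,b] → ℝⁿ and a finite nonnegative Borel measure μ on [a,b] whose support is contained in {t ∈ [a,b] : D(t)x*(t) = 0}, such that, with q(t) := p(t) + ∫_{[a,t)} D(s)ᵀ μ(ds) for t ∈ [a,b) and q(b) := p(b) + ∫_{[a,b]} D(s)ᵀ μ(ds), the following hold: (i) for almost every t ∈ [a,b], for all x ∈ ℝⁿ and all u ∈ U(t), ⟨q(t), A(t)x + B(t)u⟩ − L(t,x,u) ≤ ⟨q(t), A(t)x*(t) + B(t)u*(t)⟩ − L(t,x*(t),u*(t)) + ⟨−ṗ(t), x − x*(t)⟩; (ii) for all (x_a, x_b) ∈ E, l(x_a, x_b) − l(x*(a), x*(b)) ≥ ⟨p(a), x_a − x*(a)⟩ − ⟨q(b), x_b − x*(b)⟩. Then (x*,u*) minimizes the cost l(x(a),x(b)) + ∫_a^b L(t,x(t),u(t)) dt over all admissible processes of (LC). -/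
open MeasureTheory Set Filter
open scoped InnerProductSpace

noncomputable section

/-- Shorthand for Euclidean space `ℝⁿ`. -/
abbrev Vec (n : ℕ) := EuclideanSpace ℝ (Fin n)

/-- An admissible process for the linear-convex state-constrained problem (LC) on `[a,b]`:
`x` is absolutely continuous (encoded via an integrable derivative `x'` and the integral
representation), `ẋ(t) = A(t)x(t) + B(t)u(t)` a.e., `u` is measurable with `u(t) ∈ U(t)`
a.e., the state constraint `D(t)x(t) ≤ 0` (with `D(t)` a row vector, acting via the inner
product) holds for all `t ∈ [a,b]`, the endpoints satisfy `(x(a), x(b)) ∈ E`, and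
`t ↦ L(t,x(t),u(t))` is integrable. -/
def AdmissibleLC {n k : ℕ} (a b : ℝ)
    (A : ℝ → Vec n →L[ℝ] Vec n) (B : ℝ → Vec k →L[ℝ] Vec n)
    (D : ℝ → Vec n)
    (U : ℝ → Set (Vec k)) (E : Set (Vec n × Vec n))
    (L : ℝ → Vec n → Vec k → ℝ)
    (x : ℝ → Vec n) (u : ℝ → Vec k) : Prop :=
  AEStronglyMeasurable u (volume.restrict (Icc a b)) ∧
  (∀ᵐ t ∂(volume.restrict (Icc a b)), u t ∈ U t) ∧
  (∃ x' : ℝ → Vec n, IntegrableOn x' (Icc a b) ∧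
    (∀ t ∈ Icc a b, x t = x a + ∫ s in a..t, x' s) ∧
    (∀ᵐ t ∂(volume.restrict (Icc a b)), x' t = A t (x t) + B t (u t))) ∧
  (∀ t ∈ Icc a b, ⟪D t, x t⟫_ℝ ≤ 0) ∧
  (x a, x b) ∈ E ∧
  IntegrableOn (fun t => L t (x t) (u t)) (Icc a b)

/-- The cost of a process. -/
def costLC {n k : ℕ} (a b : ℝ) (l : Vec n → Vec n → ℝ) (L : ℝ → Vec n → Vec k → ℝ)
    (x : ℝ → Vec n) (u : ℝ → Vec k) : ℝ :=
  l (x a) (x b) + ∫ t in a..b, L t (x t) (u t)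
/-! With `δ = x - x*`, condition (i) evaluated at `(x(t), u(t))` bounds `⟪q, δ'⟫ + ⟪p', δ⟫`
by `L(t, x, u) - L(t, x*, u*)`. Integrating over `[a, b]` (Fubini over the triangle
`a ≤ s < t ≤ b` for the part of `q` coming from `μ`) turns the left side into
`⟪q b, δ b⟫ - ⟪p a, δ a⟫ - ∫ ⟪D, δ⟫ dμ`, and the last integral is `≤ 0` because `μ` only charges
times where `D x* = 0`, while `D x ≤ 0`. Adding the endpoint inequality (ii) gives the claim. -/

section Primitive

variable {E : Type*} [NormedAddCommGroup E] [NormedSpace ℝ E]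

def IsPrimitiveOn (f f' : ℝ → E) (a b : ℝ) : Prop :=
  IntegrableOn f' (Icc a b) ∧ ∀ t ∈ Icc a b, f t = f a + ∫ s in a..t, f' s

namespace IsPrimitiveOn

variable {f g f' g' : ℝ → E} {a b : ℝ}

theorem intervalIntegrable (hf : IsPrimitiveOn f f' a b) {s t : ℝ} (hs : s ∈ Icc a b)
    (ht : t ∈ Icc a b) : IntervalIntegrable f' volume s t :=
  hf.1.mono_set (uIcc_subset_Icc hs ht) |>.intervalIntegrable

theorem intervalIntegral_eq_sub (hf : IsPrimitiveOn f f' a b) {s t : ℝ} (hs : s ∈ Icc a b)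
    (ht : t ∈ Icc a b) : ∫ r in s..t, f' r = f t - f s := by
  have ha : a ∈ Icc a b := ⟨le_rfl, hs.1.trans hs.2⟩
  rw [← intervalIntegral.integral_interval_sub_left (hf.intervalIntegrable ha ht)
    (hf.intervalIntegrable ha hs), hf.2 t ht, hf.2 s hs]
  abel

theorem setIntegral_Ioc_eq_sub (hf : IsPrimitiveOn f f' a b) {s t : ℝ} (hs : s ∈ Icc a b)
    (ht : t ∈ Icc a b) (hst : s ≤ t) : ∫ r in Ioc s t, f' r = f t - f s := by
  rw [← intervalIntegral.integral_of_le hst, hf.intervalIntegral_eq_sub hs ht]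

theorem setIntegral_Ico_eq_sub (hf : IsPrimitiveOn f f' a b) {s t : ℝ} (hs : s ∈ Icc a b)
    (ht : t ∈ Icc a b) (hst : s ≤ t) : ∫ r in Ico s t, f' r = f t - f s := by
  rw [integral_Ico_eq_integral_Ioc, hf.setIntegral_Ioc_eq_sub hs ht hst]

theorem setIntegral_Icc_eq_sub (hf : IsPrimitiveOn f f' a b) (hab : a ≤ b) :
    ∫ r in Icc a b, f' r = f b - f a := by
  rw [integral_Icc_eq_integral_Ico,
    hf.setIntegral_Ico_eq_sub ⟨le_rfl, hab⟩ ⟨hab, le_rfl⟩ hab]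

theorem sub (hf : IsPrimitiveOn f f' a b) (hg : IsPrimitiveOn g g' a b) :
    IsPrimitiveOn (f - g) (f' - g') a b := by
  refine ⟨hf.1.sub hg.1, fun t ht => ?_⟩
  have ha : a ∈ Icc a b := ⟨le_rfl, ht.1.trans ht.2⟩
  simp only [Pi.sub_apply]
  rw [intervalIntegral.integral_sub (hf.intervalIntegrable ha ht) (hg.intervalIntegrable ha ht),
    hf.2 t ht, hg.2 t ht]
  abel

theorem continuousOn (hf : IsPrimitiveOn f f' a b) : ContinuousOn f (Icc a b) := by
  refine ((continuousOn_const (c := f a)).add (intervalIntegral.continuousOn_primitive hf.1)).congr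
    fun t ht => ?_
  rw [hf.2 t ht, intervalIntegral.integral_of_le ht.1, Pi.add_apply]

end IsPrimitiveOn

theorem eq_add_setIntegral_Ico_add_setIntegral_Ico {ν : Measure ℝ} {p p' q D : ℝ → E} {a b : ℝ}
    (hp : IsPrimitiveOn p p' a b)
    (hq : ∀ t ∈ Ico a b, q t = p t + ∫ s in Ico a t, D s ∂ν) {t : ℝ} (ht : t ∈ Ico a b) :
    q t = p a + (∫ s in Ico a t, p' s) + ∫ s in Ico a t, D s ∂ν := by
  rw [hq t ht, hp.setIntegral_Ico_eq_sub ⟨le_rfl, ht.1.trans ht.2.le⟩ (Ico_subset_Icc_self ht) ht.1]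
  abel

end Primitive

theorem IntegrableOn.inner_of_continuousOn {E : Type*} [NormedAddCommGroup E]
    [InnerProductSpace ℝ E] {ν : Measure ℝ} {K : Set ℝ} {h f : ℝ → E}
    (hh : IntegrableOn h K ν) (hK : IsCompact K) (hf : ContinuousOn f K) : IntegrableOn (fun s => ⟪h s, f s⟫_ℝ) K ν := by
  obtain ⟨C, hC⟩ := hK.exists_bound_of_continuousOn hf
  refine Integrable.mono' (hh.norm.mul_const C)
    (hh.aestronglyMeasurable.inner (hf.aestronglyMeasurable hK.measurableSet)) ?_
  filter_upwards [ae_restrict_mem hK.measurableSet] with s hs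
  exact (norm_inner_le_norm _ _).trans (mul_le_mul_of_nonneg_left (hC s hs) (norm_nonneg _))

section TriangleKernel

variable {E : Type*} [NormedAddCommGroup E] [InnerProductSpace ℝ E]
  {ν : Measure ℝ} {h f' : ℝ → E} {a b : ℝ}

def triangleKernel (a : ℝ) (h f' : ℝ → E) : ℝ × ℝ → ℝ :=
  {z : ℝ × ℝ | a ≤ z.2 ∧ z.2 < z.1}.indicator fun z => ⟪h z.2, f' z.1⟫_ℝ

theorem integrable_triangleKernel (hh : IntegrableOn h (Icc a b) ν)
    (hf' : IntegrableOn f' (Icc a b)) :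
    Integrable (triangleKernel a h f')
      ((volume.restrict (Icc a b)).prod (ν.restrict (Icc a b))) := by
  have hS : MeasurableSet {z : ℝ × ℝ | a ≤ z.2 ∧ z.2 < z.1} :=
    (measurableSet_le measurable_const measurable_snd).inter
      (measurableSet_lt measurable_snd measurable_fst)
  refine Integrable.mono' (hf'.norm.mul_prod hh.norm)
    ((hh.aestronglyMeasurable.comp_snd.inner hf'.aestronglyMeasurable.comp_fst).indicator hS)
    (ae_of_all _ fun z => ?_)
  calc ‖triangleKernel a h f' z‖ ≤ ‖⟪h z.2, f' z.1⟫_ℝ‖ := norm_indicator_le_norm_self _ z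
    _ ≤ ‖f' z.1‖ * ‖h z.2‖ := (norm_inner_le_norm _ _).trans_eq (mul_comm _ _)

theorem integral_triangleKernel_left [CompleteSpace E] (hh : IntegrableOn h (Icc a b) ν)
    {t : ℝ} (ht : t ≤ b) :
    ∫ s, triangleKernel a h f' (t, s) ∂ν.restrict (Icc a b) = ⟪∫ s in Ico a t, h s ∂ν, f' t⟫_ℝ := by
  have hslice : ∀ s, triangleKernel a h f' (t, s) = ⟪f' t, (Ico a t).indicator h s⟫_ℝ := by
    intro s
    by_cases hs : s ∈ Ico a t
    · simp [triangleKernel, hs, hs.1, hs.2, real_inner_comm]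
    · rw [indicator_of_notMem hs, inner_zero_right]
      exact indicator_of_notMem (s := {z : ℝ × ℝ | a ≤ z.2 ∧ z.2 < z.1}) hs _
  simp_rw [hslice]
  rw [integral_inner (hh.indicator measurableSet_Ico), integral_indicator measurableSet_Ico,
    Measure.restrict_restrict measurableSet_Ico,
    inter_eq_self_of_subset_left (Ico_subset_Icc_self.trans (Icc_subset_Icc_right ht)),
    real_inner_comm]

theorem integral_triangleKernel_right [CompleteSpace E] (hf' : IntegrableOn f' (Icc a b)) {s : ℝ}
    (hs : s ∈ Icc a b) :
    ∫ t in Icc a b, triangleKernel a h f' (t, s) = ⟪h s, ∫ t in Ioc s b, f' t⟫_ℝ := by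
  have hslice :
      ∀ t, triangleKernel a h f' (t, s) = (Ioi s).indicator (fun t => ⟪h s, f' t⟫_ℝ) t := by
    intro t
    by_cases hst : s < t
    · simp [triangleKernel, hs.1, hst]
    · simp [triangleKernel, hst]
  have hIoc : Ioi s ∩ Icc a b = Ioc s b := by
    ext t
    simp only [mem_inter_iff, mem_Ioi, mem_Icc, mem_Ioc]
    exact ⟨fun ⟨hst, _, htb⟩ => ⟨hst, htb⟩, fun ⟨hst, htb⟩ => ⟨hst, hs.1.trans hst.le, htb⟩⟩
  simp_rw [hslice]
  rw [integral_indicator measurableSet_Ioi, Measure.restrict_restrict measurableSet_Ioi, hIoc,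
    integral_inner (hf'.mono_set (hIoc ▸ inter_subset_right))]

end TriangleKernel

section IntegrationByParts

variable {E : Type*} [NormedAddCommGroup E] [InnerProductSpace ℝ E] [CompleteSpace E]
  {ν : Measure ℝ} [SFinite ν] {h f f' : ℝ → E} {a b : ℝ}

theorem integrableOn_inner_setIntegral_Ico (hh : IntegrableOn h (Icc a b) ν)
    (hf' : IntegrableOn f' (Icc a b)) :
    IntegrableOn (fun t => ⟪∫ s in Ico a t, h s ∂ν, f' t⟫_ℝ) (Icc a b) := by
  refine (integrable_triangleKernel hh hf').integral_prod_left.congr ?_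
  filter_upwards [ae_restrict_mem measurableSet_Icc] with t ht
  exact integral_triangleKernel_left hh ht.2

theorem setIntegral_inner_setIntegral_Ico_swap (hh : IntegrableOn h (Icc a b) ν)
    (hf' : IntegrableOn f' (Icc a b)) :
    ∫ t in Icc a b, ⟪∫ s in Ico a t, h s ∂ν, f' t⟫_ℝ =
      ∫ s in Icc a b, ⟪h s, ∫ t in Ioc s b, f' t⟫_ℝ ∂ν :=
  calc ∫ t in Icc a b, ⟪∫ s in Ico a t, h s ∂ν, f' t⟫_ℝ
      = ∫ t in Icc a b, ∫ s in Icc a b, triangleKernel a h f' (t, s) ∂ν :=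
        setIntegral_congr_fun measurableSet_Icc fun _ ht =>
          (integral_triangleKernel_left hh ht.2).symm
    _ = ∫ s in Icc a b, (∫ t in Icc a b, triangleKernel a h f' (t, s)) ∂ν :=
        integral_integral_swap (f := fun t s => triangleKernel a h f' (t, s))
          (integrable_triangleKernel hh hf')
    _ = ∫ s in Icc a b, ⟪h s, ∫ t in Ioc s b, f' t⟫_ℝ ∂ν :=
        setIntegral_congr_fun measurableSet_Icc fun _ hs =>
          integral_triangleKernel_right hf' hs

theorem IsPrimitiveOn.setIntegral_inner_setIntegral_Ico_eq (hf : IsPrimitiveOn f f' a b)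
    (hh : IntegrableOn h (Icc a b) ν) :
    ∫ t in Icc a b, ⟪∫ s in Ico a t, h s ∂ν, f' t⟫_ℝ =
      ⟪∫ s in Icc a b, h s ∂ν, f b⟫_ℝ - ∫ s in Icc a b, ⟪h s, f s⟫_ℝ ∂ν := by
  rw [setIntegral_inner_setIntegral_Ico_swap hh hf.1]
  calc ∫ s in Icc a b, ⟪h s, ∫ t in Ioc s b, f' t⟫_ℝ ∂ν
      = ∫ s in Icc a b, (⟪h s, f b⟫_ℝ - ⟪h s, f s⟫_ℝ) ∂ν :=
        setIntegral_congr_fun measurableSet_Icc fun s hs => by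
          rw [hf.setIntegral_Ioc_eq_sub hs ⟨hs.1.trans hs.2, le_rfl⟩ hs.2, inner_sub_right]
    _ = ⟪∫ s in Icc a b, h s ∂ν, f b⟫_ℝ - ∫ s in Icc a b, ⟪h s, f s⟫_ℝ ∂ν := by
        rw [integral_sub (hh.inner_const _)
          (IntegrableOn.inner_of_continuousOn hh isCompact_Icc hf.continuousOn)]
        simp_rw [real_inner_comm (f b)]
        rw [integral_inner hh]

end IntegrationByParts

section AdjointIdentity

variable {E : Type*} [NormedAddCommGroup E] [InnerProductSpace ℝ E] [CompleteSpace E]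
  {μ : Measure ℝ} [SFinite μ] {p p' δ δ' q D : ℝ → E} {a b : ℝ}

theorem integrableOn_adjoint_pairing (hp : IsPrimitiveOn p p' a b)
    (hδ : IsPrimitiveOn δ δ' a b) (hD : IntegrableOn D (Icc a b) μ)
    (hq : ∀ t ∈ Ico a b, q t = p t + ∫ s in Ico a t, D s ∂μ) :
    IntegrableOn (fun t => ⟪q t, δ' t⟫_ℝ + ⟪p' t, δ t⟫_ℝ) (Icc a b) := by
  have hsum : IntegrableOn (fun t => ⟪p a, δ' t⟫_ℝ + ⟪∫ s in Ico a t, p' s, δ' t⟫_ℝ +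
      ⟪∫ s in Ico a t, D s ∂μ, δ' t⟫_ℝ + ⟪p' t, δ t⟫_ℝ) (Icc a b) :=
    (((hδ.1.const_inner _).add (integrableOn_inner_setIntegral_Ico hp.1 hδ.1)).add
      (integrableOn_inner_setIntegral_Ico hD hδ.1)).add
      (IntegrableOn.inner_of_continuousOn hp.1 isCompact_Icc hδ.continuousOn)
  rw [integrableOn_Icc_iff_integrableOn_Ico]
  refine (hsum.mono_set Ico_subset_Icc_self).congr_fun (fun t ht => ?_) measurableSet_Ico
  dsimp only
  rw [eq_add_setIntegral_Ico_add_setIntegral_Ico hp hq ht, inner_add_left, inner_add_left]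

theorem setIntegral_adjoint_pairing (hab : a ≤ b) (hp : IsPrimitiveOn p p' a b)
    (hδ : IsPrimitiveOn δ δ' a b) (hD : IntegrableOn D (Icc a b) μ)
    (hq : ∀ t ∈ Ico a b, q t = p t + ∫ s in Ico a t, D s ∂μ)
    (hqb : q b = p b + ∫ s in Icc a b, D s ∂μ) :
    ∫ t in Icc a b, (⟪q t, δ' t⟫_ℝ + ⟪p' t, δ t⟫_ℝ) =
      ⟪q b, δ b⟫_ℝ - ⟪p a, δ a⟫_ℝ - ∫ s in Icc a b, ⟪D s, δ s⟫_ℝ ∂μ := by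
  have hpδ' : IntegrableOn (fun t => ⟪p a, δ' t⟫_ℝ) (Icc a b) := hδ.1.const_inner _
  have hp'δ := IntegrableOn.inner_of_continuousOn hp.1 isCompact_Icc hδ.continuousOn
  have hPδ' := integrableOn_inner_setIntegral_Ico hp.1 hδ.1
  have hGδ' := integrableOn_inner_setIntegral_Ico hD hδ.1
  calc ∫ t in Icc a b, (⟪q t, δ' t⟫_ℝ + ⟪p' t, δ t⟫_ℝ)
      = ∫ t in Icc a b, (⟪p a, δ' t⟫_ℝ + ⟪∫ s in Ico a t, p' s, δ' t⟫_ℝ +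
          ⟪∫ s in Ico a t, D s ∂μ, δ' t⟫_ℝ + ⟪p' t, δ t⟫_ℝ) := by
        rw [integral_Icc_eq_integral_Ico, integral_Icc_eq_integral_Ico]
        refine setIntegral_congr_fun measurableSet_Ico fun t ht => ?_
        rw [eq_add_setIntegral_Ico_add_setIntegral_Ico hp hq ht, inner_add_left, inner_add_left]
    _ = (∫ t in Icc a b, ⟪p a, δ' t⟫_ℝ) + (∫ t in Icc a b, ⟪∫ s in Ico a t, p' s, δ' t⟫_ℝ) +
          (∫ t in Icc a b, ⟪∫ s in Ico a t, D s ∂μ, δ' t⟫_ℝ) + ∫ t in Icc a b, ⟪p' t, δ t⟫_ℝ := by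
        rw [integral_add, integral_add, integral_add]
        exacts [hpδ', hPδ', hpδ'.add hPδ', hGδ', (hpδ'.add hPδ').add hGδ', hp'δ]
    _ = ⟪p a, δ b - δ a⟫_ℝ + (⟪p b - p a, δ b⟫_ℝ - (∫ t in Icc a b, ⟪p' t, δ t⟫_ℝ)) +
          (⟪∫ s in Icc a b, D s ∂μ, δ b⟫_ℝ - ∫ s in Icc a b, ⟪D s, δ s⟫_ℝ ∂μ) +
          ∫ t in Icc a b, ⟪p' t, δ t⟫_ℝ := by
        rw [integral_inner hδ.1, hδ.setIntegral_Icc_eq_sub hab,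
          hδ.setIntegral_inner_setIntegral_Ico_eq hp.1, hp.setIntegral_Icc_eq_sub hab,
          hδ.setIntegral_inner_setIntegral_Ico_eq hD]
    _ = ⟪q b, δ b⟫_ℝ - ⟪p a, δ a⟫_ℝ - ∫ s in Icc a b, ⟪D s, δ s⟫_ℝ ∂μ := by
        rw [hqb, inner_add_left, inner_sub_left, inner_sub_right]
        ring

end AdjointIdentity

theorem sufficiency_linear_convex_state_constrained_general
    {n k : ℕ} (a b : ℝ) (hab : a < b)
    (A : ℝ → Vec n →L[ℝ] Vec n) (B : ℝ → Vec k →L[ℝ] Vec n)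
    (D : ℝ → Vec n)
    (U : ℝ → Set (Vec k)) (E : Set (Vec n × Vec n))
    (l : Vec n → Vec n → ℝ) (L : ℝ → Vec n → Vec k → ℝ)
    (hD : ContinuousOn D (Icc a b))
    -- the reference admissible process
    (xs : ℝ → Vec n) (us : ℝ → Vec k)
    (hadm : AdmissibleLC a b A B D U E L xs us)
    -- the multipliers: an absolutely continuous `p` and a finite nonnegative measure `μ`
    (p p' : ℝ → Vec n)
    (hp'int : IntegrableOn p' (Icc a b))
    (hpAC : ∀ t ∈ Icc a b, p t = p a + ∫ s in a..t, p' s)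
    (μ : Measure ℝ) [IsFiniteMeasure μ]
    -- `μ` is supported in `{t ∈ [a,b] : D(t)x*(t) = 0}`
    (hsupp : μ {t : ℝ | ¬ (t ∈ Icc a b ∧ ⟪D t, xs t⟫_ℝ = 0)} = 0)
    -- the measure-corrected adjoint function `q`
    (q : ℝ → Vec n)
    (hq : ∀ t ∈ Ico a b, q t = p t + ∫ s in Ico a t, D s ∂μ)
    (hqb : q b = p b + ∫ s in Icc a b, D s ∂μ)
    -- (i): a.e. joint subgradient/maximization inequality
    (hi : ∀ᵐ t ∂(volume.restrict (Icc a b)), ∀ x : Vec n, ∀ u ∈ U t,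
      ⟪q t, A t x + B t u⟫_ℝ - L t x u ≤
        ⟪q t, A t (xs t) + B t (us t)⟫_ℝ - L t (xs t) (us t) + ⟪-p' t, x - xs t⟫_ℝ)
    -- (ii): transversality subgradient inequality
    (hii : ∀ xa xb, (xa, xb) ∈ E →
      l xa xb - l (xs a) (xs b) ≥ ⟪p a, xa - xs a⟫_ℝ - ⟪q b, xb - xs b⟫_ℝ) :
    ∀ x u, AdmissibleLC a b A B D U E L x u →
      costLC a b l L xs us ≤ costLC a b l L x u := by
  intro x u hadm'
  obtain ⟨-, -, ⟨xs', hxs', hxsAC, hxs'eq⟩, -, -, hLs⟩ := hadm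
  obtain ⟨-, hu, ⟨x', hx', hxAC, hx'eq⟩, hxD, hxE, hL⟩ := hadm'
  have hδ : IsPrimitiveOn (x - xs) (x' - xs') a b := IsPrimitiveOn.sub ⟨hx', hxAC⟩ ⟨hxs', hxsAC⟩
  have hp : IsPrimitiveOn p p' a b := ⟨hp'int, hpAC⟩
  have hDμ : IntegrableOn D (Icc a b) μ := hD.integrableOn_compact isCompact_Icc
  have hpointwise : ∀ᵐ t ∂(volume.restrict (Icc a b)),
      ⟪q t, (x' - xs') t⟫_ℝ + ⟪p' t, (x - xs) t⟫_ℝ ≤ L t (x t) (u t) - L t (xs t) (us t) := by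
    filter_upwards [hi, hx'eq, hxs'eq, hu] with t hit hx't hxs't hut
    have := hit (x t) (u t) hut
    rw [← hx't, ← hxs't, inner_neg_left] at this
    rw [Pi.sub_apply, Pi.sub_apply, inner_sub_right]
    linarith
  have hμ : ∫ s in Icc a b, ⟪D s, (x - xs) s⟫_ℝ ∂μ ≤ 0 := by
    refine setIntegral_nonpos_ae measurableSet_Icc ?_
    filter_upwards [ae_iff.mpr hsupp] with s hs _
    rw [Pi.sub_apply, inner_sub_right, hs.2, sub_zero]
    exact hxD s hs.1
  have hintegral : ⟪q b, (x - xs) b⟫_ℝ - ⟪p a, (x - xs) a⟫_ℝ -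
        ∫ s in Icc a b, ⟪D s, (x - xs) s⟫_ℝ ∂μ ≤
      (∫ t in Icc a b, L t (x t) (u t)) - ∫ t in Icc a b, L t (xs t) (us t) := by
    rw [← setIntegral_adjoint_pairing hab.le hp hδ hDμ hq hqb, ← integral_sub hL hLs]
    exact integral_mono_ae (integrableOn_adjoint_pairing hp hδ hDμ hq) (hL.sub hLs) hpointwise
  have hend := hii (x a) (x b) hxE
  simp only [costLC, intervalIntegral.integral_of_le hab.le, ← integral_Icc_eq_integral_Ioc]
  simp only [Pi.sub_apply] at hintegral hμ
  linarith

/-- for the linear-convex state-constrained problem (LC), the existence of an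
absolutely continuous `p` and a finite nonnegative measure `μ` supported on the set where
the state constraint is active along `(x*,u*)`, satisfying the normal (λ₀ = 1)
extremality conditions (i)-(ii) (expressed as convex subgradient inequalities with the
measure-corrected adjoint `q`), is sufficient for `(x*,u*)` to be a global minimizer
among admissible processes of (LC). -/
theorem sufficiency_linear_convex_state_constrained
    {n k : ℕ} (a b : ℝ) (hab : a < b)
    (A : ℝ → Vec n →L[ℝ] Vec n) (B : ℝ → Vec k →L[ℝ] Vec n)
    (D : ℝ → Vec n)
    (U : ℝ → Set (Vec k)) (E : Set (Vec n × Vec n))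
    (l : Vec n → Vec n → ℝ) (L : ℝ → Vec n → Vec k → ℝ)
    (hA : IntegrableOn A (Icc a b))
    (hB : AEStronglyMeasurable B (volume.restrict (Icc a b)))
    (hBbdd : ∃ M : ℝ, ∀ᵐ t ∂(volume.restrict (Icc a b)), ‖B t‖ ≤ M)
    (hD : ContinuousOn D (Icc a b))
    (hEclosed : IsClosed E) (hEconv : Convex ℝ E)
    (hUconv : ∀ t, Convex ℝ (U t))
    (hlconv : ConvexOn ℝ univ (fun q : Vec n × Vec n => l q.1 q.2))
    (hLconv : ∀ t, ConvexOn ℝ univ (fun q : Vec n × Vec k => L t q.1 q.2))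
    -- the reference admissible process
    (xs : ℝ → Vec n) (us : ℝ → Vec k)
    (hadm : AdmissibleLC a b A B D U E L xs us)
    -- the multipliers: an absolutely continuous `p` and a finite nonnegative measure `μ`
    (p p' : ℝ → Vec n)
    (hp'int : IntegrableOn p' (Icc a b))
    (hpAC : ∀ t ∈ Icc a b, p t = p a + ∫ s in a..t, p' s)
    (μ : Measure ℝ) [IsFiniteMeasure μ]
    -- `μ` is supported in `{t ∈ [a,b] : D(t)x*(t) = 0}`
    (hsupp : μ {t : ℝ | ¬ (t ∈ Icc a b ∧ ⟪D t, xs t⟫_ℝ = 0)} = 0)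
    -- the measure-corrected adjoint function `q`
    (q : ℝ → Vec n)
    (hq : ∀ t ∈ Ico a b, q t = p t + ∫ s in Ico a t, D s ∂μ)
    (hqb : q b = p b + ∫ s in Icc a b, D s ∂μ)
    -- (i): a.e. joint subgradient/maximization inequality
    (hi : ∀ᵐ t ∂(volume.restrict (Icc a b)), ∀ x : Vec n, ∀ u ∈ U t,
      ⟪q t, A t x + B t u⟫_ℝ - L t x u ≤
        ⟪q t, A t (xs t) + B t (us t)⟫_ℝ - L t (xs t) (us t) + ⟪-p' t, x - xs t⟫_ℝ)
    -- (ii): transversality subgradient inequality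
    (hii : ∀ xa xb, (xa, xb) ∈ E →
      l xa xb - l (xs a) (xs b) ≥ ⟪p a, xa - xs a⟫_ℝ - ⟪q b, xb - xs b⟫_ℝ) :
    ∀ x u, AdmissibleLC a b A B D U E L x u →
      costLC a b l L xs us ≤ costLC a b l L x u :=
  sufficiency_linear_convex_state_constrained_general a b hab A B D U E l L hD xs us hadm p p'
    hp'int hpAC μ hsupp q hq hqb hi hii
end
end

section
/- There do not exist a scalar λ₀ ≥ 0, an absolutely continuous function p : [0,1] → ℝ, and a measurable function e : [0,1] → ℝ with e(t) ∈ [−1,1] for a.e. t, such that p(1) = 0, ṗ(t) = λ₀(1 + e(t)) for a.e. t ∈ [0,1], 4p(t) + λ₀ e(t) = 0 for a.e. t ∈ [0,1], and λ₀ + sup_{t ∈ [0,1]} |p(t)| > 0. -/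
/-!
The adjoint equation `p' = λ₀(1 + e) ≥ 0` together with `p(1) = 0` makes `p ≤ 0`, so the
stationarity condition `λ₀ e = -4p ≥ 0` improves it to `p' ≥ λ₀`, whence `p(t) ≤ -λ₀(1 - t)`.
Feeding this back into stationarity gives `λ₀ ≥ λ₀ e = -4p ≥ 4λ₀(1 - t)`, impossible for `λ₀ > 0`
on `t < 3/4`. Hence `λ₀ = 0`, then `p' = 0` and `p ≡ 0`, violating nontriviality.
-/

open MeasureTheory Set Filter

section AbsolutelyContinuous

variable {p p' : ℝ → ℝ} {a b t : ℝ}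

theorem sub_eq_intervalIntegral_of_eq_add_integral (hp' : IntegrableOn p' (Icc a b))
    (hrep : ∀ t ∈ Icc a b, p t = p a + ∫ s in a..t, p' s) (ht : t ∈ Icc a b) :
    p b - p t = ∫ s in t..b, p' s := by
  have hb : b ∈ Icc a b := ⟨ht.1.trans ht.2, le_rfl⟩
  have hint : ∀ c ∈ Icc a b, IntervalIntegrable p' volume a c := fun c hc =>
    (hp'.mono_set (uIcc_subset_Icc ⟨le_rfl, hc.1.trans hc.2⟩ hc)).intervalIntegrable
  rw [hrep b hb, hrep t ht, ← intervalIntegral.integral_interval_sub_left (hint b hb) (hint t ht)]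
  ring

theorem mul_sub_le_sub_of_ae_le_deriv {c : ℝ} (hp' : IntegrableOn p' (Icc a b))
    (hrep : ∀ t ∈ Icc a b, p t = p a + ∫ s in a..t, p' s)
    (hc : ∀ᵐ s ∂volume.restrict (Icc a b), c ≤ p' s) (ht : t ∈ Icc a b) :
    c * (b - t) ≤ p b - p t := by
  rw [sub_eq_intervalIntegral_of_eq_add_integral hp' hrep ht]
  have hsub : Icc t b ⊆ Icc a b := Icc_subset_Icc ht.1 le_rfl
  calc c * (b - t) = ∫ _ in t..b, c := by simp [mul_comm]
    _ ≤ ∫ s in t..b, p' s :=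
      intervalIntegral.integral_mono_ae_restrict ht.2 intervalIntegrable_const
        (hp'.mono_set (uIcc_subset_Icc ht ⟨ht.1.trans ht.2, le_rfl⟩)).intervalIntegrable
        (ae_restrict_of_ae_restrict_of_subset hsub hc)

theorem eq_of_ae_deriv_eq_zero (hp' : IntegrableOn p' (Icc a b))
    (hrep : ∀ t ∈ Icc a b, p t = p a + ∫ s in a..t, p' s)
    (h0 : ∀ᵐ s ∂volume.restrict (Icc a b), p' s = 0) (ht : t ∈ Icc a b) : p t = p b := by
  have hzero : ∫ s in t..b, p' s = 0 := by
    refine intervalIntegral.integral_zero_ae ?_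
    filter_upwards [(ae_restrict_iff' measurableSet_Icc).1 h0] with s hs hst
    exact hs (uIoc_subset_uIcc.trans (uIcc_subset_Icc ht ⟨ht.1.trans ht.2, le_rfl⟩) hst)
  linarith [sub_eq_intervalIntegral_of_eq_add_integral hp' hrep ht]

end AbsolutelyContinuous

theorem exists_mem_Icc_of_ae_restrict_Icc {P : ℝ → Prop} {a b : ℝ} (hab : a < b)
    (h : ∀ᵐ t ∂volume.restrict (Icc a b), P t) : ∃ t ∈ Icc a b, P t := by
  have : (ae (volume.restrict (Icc a b))).NeBot := ae_restrict_neBot.2 (by simp [hab])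
  exact ((ae_restrict_mem measurableSet_Icc).and h).exists

/-- there is no choice of multipliers `λ₀ ≥ 0`, absolutely continuous
`p : [0,1] → ℝ` (encoded via an integrable derivative `p'` and the integral
representation), and measurable `e : [0,1] → ℝ` with `e(t) ∈ [-1,1]` a.e., such that
`p(1) = 0`, `ṗ(t) = λ₀(1 + e(t))` a.e., `4p(t) + λ₀ e(t) = 0` a.e., and
`λ₀ + sup_{t ∈ [0,1]} |p(t)| > 0`. -/
theorem no_multipliers_for_zero_process :
    ¬ ∃ (lam : ℝ) (p p' e : ℝ → ℝ),
      0 ≤ lam ∧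
      IntegrableOn p' (Icc (0:ℝ) 1) ∧
      (∀ t ∈ Icc (0:ℝ) 1, p t = p 0 + ∫ s in (0:ℝ)..t, p' s) ∧
      AEStronglyMeasurable e (volume.restrict (Icc (0:ℝ) 1)) ∧
      (∀ᵐ t ∂(volume.restrict (Icc (0:ℝ) 1)), e t ∈ Icc (-1:ℝ) 1) ∧
      p 1 = 0 ∧
      (∀ᵐ t ∂(volume.restrict (Icc (0:ℝ) 1)), p' t = lam * (1 + e t)) ∧
      (∀ᵐ t ∂(volume.restrict (Icc (0:ℝ) 1)), 4 * p t + lam * e t = 0) ∧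
      0 < lam + ⨆ t : Icc (0:ℝ) 1, |p (t : ℝ)| := by
  rintro ⟨lam, p, p', e, hlam, hp', hrep, -, he, hp1, hode, hstat, hpos⟩
  have hmem : ∀ᵐ t ∂volume.restrict (Icc (0:ℝ) 1), t ∈ Icc (0:ℝ) 1 :=
    ae_restrict_mem measurableSet_Icc
  have hp_nonpos : ∀ t ∈ Icc (0:ℝ) 1, p t ≤ 0 := fun t ht => by
    have hp'_nonneg : ∀ᵐ s ∂volume.restrict (Icc (0:ℝ) 1), 0 ≤ p' s := by
      filter_upwards [hode, he] with s hs hes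
      rw [hs]
      exact mul_nonneg hlam (by linarith [hes.1])
    linarith [mul_sub_le_sub_of_ae_le_deriv hp' hrep hp'_nonneg ht]
  have hp_le : ∀ t ∈ Icc (0:ℝ) 1, p t ≤ -(lam * (1 - t)) := fun t ht => by
    have hp'_ge : ∀ᵐ s ∂volume.restrict (Icc (0:ℝ) 1), lam ≤ p' s := by
      filter_upwards [hode, hstat, hmem] with s hs hst hsI
      linarith [hp_nonpos s hsI]
    linarith [mul_sub_le_sub_of_ae_le_deriv hp' hrep hp'_ge ht]
  have hlam0 : lam = 0 := by
    have hbound : ∀ᵐ t ∂volume.restrict (Icc (0:ℝ) 1), lam * (3 - 4 * t) ≤ 0 := by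
      filter_upwards [hstat, he, hmem] with t hst het htI
      nlinarith [hp_le t htI, het.2]
    obtain ⟨t, ht, hlt⟩ := exists_mem_Icc_of_ae_restrict_Icc (by norm_num : (0:ℝ) < 1 / 2)
      (ae_restrict_of_ae_restrict_of_subset (Icc_subset_Icc le_rfl (by norm_num)) hbound)
    nlinarith [ht.2]
  subst hlam0
  have hp_zero : ∀ t ∈ Icc (0:ℝ) 1, p t = 0 := fun t ht => by
    have hp'_zero : ∀ᵐ s ∂volume.restrict (Icc (0:ℝ) 1), p' s = 0 := by
      filter_upwards [hode] with s hs
      rw [hs, zero_mul]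
    rw [eq_of_ae_deriv_eq_zero hp' hrep hp'_zero ht, hp1]
  simp [hp_zero] at hpos
end
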